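/- arXiv:2207.10867 — 4 statements merged into one kernel-verified Lean document; each statement's English description precedes it below -/
import Mathlib

section
/- Let N ≥ 1 and let ε : Fin N → ℤ and b : Fin N → Bool encode a cyclic sequence of moves on ℤ/n × {±1}: for a 'crossing' position j (b j = false) the move sends (a,e) ↦ (a + ε j, e), and for a 'bar' position j (b j = true) the move sends (a,e) ↦ (−a, −e). Then there exists a function C : Fin (N+1) → ℤ/n × {±1} with C 0 = C N and C (j+1) obtained from C j by the j-th move if and only if the number of bar positions is even and n divides the signed sum d = Σ_j σ(j)·ε j over crossing positions j, where σ(j) = (−1)^{#\{i < j : b i = true\}} ∈ {+1,−1}. -/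
/-- A twisted intersection coloring mod `n` for cyclic move data `(ε, b)`:
`C : Fin (N+1) → ZMod n × ℤˣ` is closed (`C 0 = C N`) and follows the moves:
at a crossing position (`b j = false`) the first coordinate changes by `ε j`,
at a bar position (`b j = true`) the value `(a,e)` becomes `(-a,-e)`. -/
def IsColoring (n N : ℕ) (ε : Fin N → ℤ) (b : Fin N → Bool)
    (C : Fin (N + 1) → ZMod n × ℤˣ) : Prop :=
  C 0 = C (Fin.last N) ∧
  ∀ j : Fin N, C j.succ =
    if b j then (-(C j.castSucc).1, -(C j.castSucc).2)
    else ((C j.castSucc).1 + (ε j : ZMod n), (C j.castSucc).2)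

/-- The sign `σ(j) = (-1)^{#{i < j : b i = true}}`. -/
def sgn (N : ℕ) (b : Fin N → Bool) (j : Fin N) : ℤ :=
  (-1) ^ (Finset.univ.filter (fun i : Fin N => i < j ∧ b i = true)).card

/-- The signed sum (defect) `d = Σ_{j : b j = false} σ(j)·ε j`. -/
def defect (N : ℕ) (ε : Fin N → ℤ) (b : Fin N → Bool) : ℤ :=
  ∑ j ∈ Finset.univ.filter (fun j : Fin N => b j = false), sgn N b j * ε j

/-- The number of bar positions. -/
def numBars (N : ℕ) (b : Fin N → Bool) : ℕ :=
  (Finset.univ.filter (fun j : Fin N => b j = true)).card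

namespace Stmt6Aux

/-- number of bars among positions `< k`. -/
def cnt (b' : ℕ → Bool) (k : ℕ) : ℕ :=
  ((Finset.range k).filter (fun i => b' i = true)).card

/-- signed partial sum. -/
def S (b' : ℕ → Bool) (e' : ℕ → ℤ) : ℕ → ℤ
  | 0 => 0
  | k+1 => S b' e' k + if b' k then 0 else (-1) ^ (cnt b' k) * e' k

lemma cnt_succ (b' : ℕ → Bool) (k : ℕ) :
    cnt b' (k+1) = cnt b' k + if b' k then 1 else 0 := by
  unfold cnt
  rw [Finset.range_add_one, Finset.filter_insert]
  split
  · rw [Finset.card_insert_of_notMem (by simp)]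
  · simp

lemma card_filter_eq (N : ℕ) (b : Fin N → Bool) (k : ℕ) (hk : k ≤ N) :
    (Finset.univ.filter (fun i : Fin N => i.val < k ∧ b i = true)).card
      = cnt (fun m => if h : m < N then b ⟨m, h⟩ else false) k := by
  unfold cnt
  apply Finset.card_bij (fun a _ => a.val)
  · intro a ha
    simp only [Finset.mem_filter, Finset.mem_univ, true_and] at ha
    simp [ha.1, a.isLt, ha.2]
  · intro a _ a' _ h
    exact Fin.ext h
  · intro m hm
    simp only [Finset.mem_filter, Finset.mem_range] at hm
    have hmN : m < N := lt_of_lt_of_le hm.1 hk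
    refine ⟨⟨m, hmN⟩, ?_, rfl⟩
    simp only [Finset.mem_filter, Finset.mem_univ, true_and]
    exact ⟨hm.1, by simpa [hmN] using hm.2⟩

lemma S_eq_sum (b' : ℕ → Bool) (e' : ℕ → ℤ) (k : ℕ) :
    S b' e' k = ∑ i ∈ Finset.range k,
      (if b' i then 0 else (-1) ^ (cnt b' i) * e' i) := by
  induction k with
  | zero => simp [S]
  | succ k ih => rw [Finset.sum_range_succ, ← ih]; rfl

lemma sq_pow_neg_one {R : Type*} [Monoid R] [HasDistribNeg R] (c : ℕ) :
    ((-1 : R) ^ c) * ((-1 : R) ^ c) = 1 := by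
  rw [← pow_add, ← two_mul, pow_mul, neg_one_sq, one_pow]

end Stmt6Aux

open Stmt6Aux in
theorem stmt_6 (N n : ℕ) (hN : 1 ≤ N) (ε : Fin N → ℤ) (b : Fin N → Bool) :
    (∃ C : Fin (N + 1) → ZMod n × ℤˣ, IsColoring n N ε b C) ↔
      Even (numBars N b) ∧ (n : ℤ) ∣ defect N ε b := by
  set b' : ℕ → Bool := fun m => if h : m < N then b ⟨m, h⟩ else false with hb'
  set e' : ℕ → ℤ := fun m => if h : m < N then ε ⟨m, h⟩ else 0 with he'
  have hb : ∀ j : Fin N, b' j.val = b j := by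
    intro j; simp [hb', j.isLt]
  have he : ∀ j : Fin N, e' j.val = ε j := by
    intro j; simp [he', j.isLt]
  have hsgn : ∀ j : Fin N, sgn N b j = (-1 : ℤ) ^ (cnt b' j.val) := by
    intro j
    unfold sgn
    have hfe : Finset.univ.filter (fun i : Fin N => i < j ∧ b i = true)
        = Finset.univ.filter (fun i : Fin N => i.val < j.val ∧ b i = true) := by
      apply Finset.filter_congr
      intro i _
      rw [Fin.lt_def]
    rw [hfe, card_filter_eq N b j.val (le_of_lt j.isLt)]
  have hdef : defect N ε b = S b' e' N := by
    unfold defect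
    rw [Finset.sum_filter, S_eq_sum, ← Fin.sum_univ_eq_sum_range]
    apply Finset.sum_congr rfl
    intro j _
    rw [hsgn j, hb j, he j]
    cases h : b j <;> simp [h]
  have hnum : numBars N b = cnt b' N := by
    unfold numBars
    have hfe : Finset.univ.filter (fun j : Fin N => b j = true)
        = Finset.univ.filter (fun j : Fin N => j.val < N ∧ b j = true) := by
      apply Finset.filter_congr
      intro i _
      simp [i.isLt]
    rw [hfe, card_filter_eq N b N le_rfl]
  constructor
  · rintro ⟨C, hC0, hCrec⟩
    have key : ∀ k : ℕ, ∀ hk : k ≤ N,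
        (C ⟨k, Nat.lt_succ_of_le hk⟩).1
          = (((-1 : ℤ) ^ (cnt b' k) : ℤ) : ZMod n) * ((C 0).1 + ((S b' e' k : ℤ) : ZMod n))
        ∧ (C ⟨k, Nat.lt_succ_of_le hk⟩).2 = (-1 : ℤˣ) ^ (cnt b' k) * (C 0).2 := by
      intro k
      induction k with
      | zero =>
        intro _
        constructor
        · show (C 0).1 = _
          simp [cnt, S]
        · show (C 0).2 = _
          simp [cnt]
      | succ k ih =>
        intro hk
        have hkN : k < N := hk
        have ih' := ih (le_of_lt hkN)
        have hrec := hCrec ⟨k, hkN⟩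
        have hsucc : (⟨k, hkN⟩ : Fin N).succ = ⟨k + 1, Nat.lt_succ_of_le hk⟩ := rfl
        have hcast : (⟨k, hkN⟩ : Fin N).castSucc
            = ⟨k, Nat.lt_succ_of_le (le_of_lt hkN)⟩ := rfl
        rw [hsucc, hcast, show b ⟨k, hkN⟩ = b' k from (hb ⟨k, hkN⟩).symm] at hrec
        cases h : b' k with
        | true =>
          rw [h, if_pos rfl] at hrec
          rw [hrec]
          constructor
          · show -(C _).1 = _
            rw [ih'.1, cnt_succ, h, if_pos rfl, show S b' e' (k+1) = S b' e' k by
              simp [S, h]]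
            push_cast [pow_succ]
            ring
          · show -(C _).2 = _
            rw [ih'.2, cnt_succ, h, if_pos rfl, pow_succ, mul_neg_one, neg_mul]
        | false =>
          rw [h, if_neg (by simp)] at hrec
          rw [hrec]
          have hSk : S b' e' (k+1) = S b' e' k + (-1) ^ (cnt b' k) * e' k := by
            simp [S, h]
          have hck : cnt b' (k+1) = cnt b' k := by
            rw [cnt_succ, h]; simp
          constructor
          · show (C _).1 + _ = _
            rw [ih'.1, hck, hSk, show ε ⟨k, hkN⟩ = e' k from (he ⟨k, hkN⟩).symm]
            have hx : ((-1 : ZMod n) ^ (cnt b' k)) * ((-1 : ZMod n) ^ (cnt b' k)) = 1 :=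
              sq_pow_neg_one _
            push_cast
            linear_combination (-(e' k : ZMod n)) * hx
          · show (C _).2 = _
            rw [ih'.2, hck]
    have hlast : (⟨N, Nat.lt_succ_of_le le_rfl⟩ : Fin (N+1)) = Fin.last N := rfl
    have hkey := key N le_rfl
    rw [hlast, ← hC0] at hkey
    -- units: even number of bars
    have hu : (-1 : ℤˣ) ^ (cnt b' N) = 1 := by
      have := hkey.2
      have h2 : (1 : ℤˣ) * (C 0).2 = (-1 : ℤˣ) ^ (cnt b' N) * (C 0).2 := by
        rw [one_mul, ← this]
      exact (mul_right_cancel h2).symm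
    have heven : Even (cnt b' N) := by
      rcases Nat.even_or_odd (cnt b' N) with h | h
      · exact h
      · exfalso
        rw [h.neg_one_pow] at hu
        exact absurd hu (by decide)
    refine ⟨by rw [hnum]; exact heven, ?_⟩
    have h1 := hkey.1
    rw [heven.neg_one_pow] at h1
    push_cast at h1
    rw [one_mul] at h1
    have : ((S b' e' N : ℤ) : ZMod n) = 0 := by
      have := left_eq_add.mp h1
      exact this
    rw [hdef]
    exact (ZMod.intCast_zmod_eq_zero_iff_dvd _ _).mp this
  · rintro ⟨heven, hdvd⟩
    have hevenc : Even (cnt b' N) := hnum ▸ heven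
    refine ⟨fun k => ((((-1 : ℤ) ^ (cnt b' k.val) * S b' e' k.val : ℤ) : ZMod n),
      (-1 : ℤˣ) ^ (cnt b' k.val)), ?_, ?_⟩
    · -- closed
      have hSN : ((S b' e' N : ℤ) : ZMod n) = 0 := by
        rw [← hdef]
        exact (ZMod.intCast_zmod_eq_zero_iff_dvd _ _).mpr hdvd
      show ((((-1 : ℤ) ^ (cnt b' 0) * S b' e' 0 : ℤ) : ZMod n), (-1 : ℤˣ) ^ (cnt b' 0))
          = ((((-1 : ℤ) ^ (cnt b' N) * S b' e' N : ℤ) : ZMod n), (-1 : ℤˣ) ^ (cnt b' N))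
      rw [Prod.mk.injEq]
      constructor
      · push_cast [hevenc.neg_one_pow, hSN]
        simp [S, cnt]
      · rw [hevenc.neg_one_pow]
        simp [cnt]
    · intro j
      rw [show b j = b' j.val from (hb j).symm]
      cases h : b' j.val with
      | true =>
        rw [if_pos rfl]
        show ((((-1 : ℤ) ^ (cnt b' (j.val + 1)) * S b' e' (j.val + 1) : ℤ) : ZMod n),
            (-1 : ℤˣ) ^ (cnt b' (j.val + 1)))
          = (-((((-1 : ℤ) ^ (cnt b' j.val) * S b' e' j.val : ℤ) : ZMod n)),
            -((-1 : ℤˣ) ^ (cnt b' j.val)))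
        rw [Prod.mk.injEq, cnt_succ, h, if_pos rfl,
          show S b' e' (j.val + 1) = S b' e' j.val by simp [S, h]]
        constructor
        · push_cast [pow_succ]
          ring
        · rw [pow_succ, mul_neg_one]
      | false =>
        rw [if_neg (by simp)]
        have hSk : S b' e' (j.val + 1)
            = S b' e' j.val + (-1) ^ (cnt b' j.val) * e' j.val := by
          simp [S, h]
        have hck : cnt b' (j.val + 1) = cnt b' j.val := by
          rw [cnt_succ, h]; simp
        show ((((-1 : ℤ) ^ (cnt b' (j.val + 1)) * S b' e' (j.val + 1) : ℤ) : ZMod n),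
            (-1 : ℤˣ) ^ (cnt b' (j.val + 1)))
          = (((((-1 : ℤ) ^ (cnt b' j.val) * S b' e' j.val : ℤ) : ZMod n) + (ε j : ZMod n)),
            (-1 : ℤˣ) ^ (cnt b' j.val))
        rw [Prod.mk.injEq, hck, hSk, show ε j = e' j.val from (he j).symm]
        refine ⟨?_, rfl⟩
        have hx : ((-1 : ZMod n) ^ (cnt b' j.val)) * ((-1 : ZMod n) ^ (cnt b' j.val)) = 1 :=
          sq_pow_neg_one _
        push_cast
        linear_combination (e' j.val : ZMod n) * hx
end

section
/- With the setup of the cyclic coloring model: let C and C' be two colorings (closed solutions) with values in ℤ/n × {±1} for the same move data (ε, b), and suppose the second components of C and C' agree at every position. Then there exists k ∈ ℤ/n such that for every position j: if the second component of C j is +1 then the first component of C j equals the first component of C' j plus k, and if the second component of C j is −1 then the first component of C j equals the first component of C' j minus k. -/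
theorem stmt_7 (N n : ℕ) (ε : Fin N → ℤ) (b : Fin N → Bool)
    (C C' : Fin (N + 1) → ZMod n × ℤˣ)
    (hC : IsColoring n N ε b C) (hC' : IsColoring n N ε b C')
    (h2 : ∀ j, (C j).2 = (C' j).2) :
    ∃ k : ZMod n, ∀ j,
      ((C j).2 = 1 → (C j).1 = (C' j).1 + k) ∧
      ((C j).2 = -1 → (C j).1 = (C' j).1 - k) := by
  obtain ⟨-, hstep⟩ := hC
  obtain ⟨-, hstep'⟩ := hC'
  set k : ZMod n := if (C 0).2 = 1 then (C 0).1 - (C' 0).1 else (C' 0).1 - (C 0).1 with hk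
  refine ⟨k, ?_⟩
  intro j
  induction j using Fin.induction with
  | zero =>
    rcases Int.units_eq_one_or (C 0).2 with h | h
    · constructor
      · intro _
        rw [hk, if_pos h]; ring
      · intro h1
        rw [h] at h1
        exact absurd h1 (by decide)
    · constructor
      · intro h1
        rw [h] at h1
        exact absurd h1 (by decide)
      · intro _
        rw [hk, if_neg (by rw [h]; decide)]; ring
  | succ i ih =>
    have hC1 := hstep i
    have hC1' := hstep' i
    have h2i := h2 i.castSucc
    cases hb : b i with
    | false =>
      rw [hb, if_neg (by simp)] at hC1 hC1'
      have e1 : (C i.succ).1 = (C i.castSucc).1 + (ε i : ZMod n) := by rw [hC1]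
      have e2 : (C i.succ).2 = (C i.castSucc).2 := by rw [hC1]
      have e1' : (C' i.succ).1 = (C' i.castSucc).1 + (ε i : ZMod n) := by rw [hC1']
      constructor
      · intro h1
        rw [e2] at h1
        rw [e1, e1', (ih.1 h1)]; ring
      · intro h1
        rw [e2] at h1
        rw [e1, e1', (ih.2 h1)]; ring
    | true =>
      rw [hb, if_pos rfl] at hC1 hC1'
      have e1 : (C i.succ).1 = -(C i.castSucc).1 := by rw [hC1]
      have e2 : (C i.succ).2 = -(C i.castSucc).2 := by rw [hC1]
      have e1' : (C' i.succ).1 = -(C' i.castSucc).1 := by rw [hC1']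
      constructor
      · intro h1
        rw [e2] at h1
        have hcs : (C i.castSucc).2 = -1 := neg_eq_iff_eq_neg.mp h1
        rw [e1, e1', (ih.2 hcs)]; ring
      · intro h1
        rw [e2] at h1
        have hcs : (C i.castSucc).2 = 1 := by simpa using neg_eq_iff_eq_neg.mp h1
        rw [e1, e1', (ih.1 hcs)]; ring
end

section
/- With the setup of the cyclic coloring model on ℤ/n × {±1} with an even number of bars and n dividing the defect: for any prescribed initial value (a₀, e₀) ∈ ℤ/n × {±1} there exists a unique coloring C with C 0 = (a₀, e₀). Consequently, for n > 0 there are exactly 2n colorings. -/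
namespace Stmt8Aux

variable (n N : ℕ) (ε : Fin N → ℤ) (b : Fin N → Bool)

/-- One step of the coloring recurrence. -/
def stepF (j : Fin N) (p : ZMod n × ℤˣ) : ZMod n × ℤˣ :=
  if b j then (-p.1, -p.2) else (p.1 + (ε j : ZMod n), p.2)

/-- The unique sequence with given initial value following the recurrence. -/
def seqC (v : ZMod n × ℤˣ) : ℕ → ZMod n × ℤˣ
  | 0 => v
  | k+1 => if h : k < N then stepF n N ε b ⟨k, h⟩ (seqC v k) else seqC v k

/-- Number of bars among the first `k` positions. -/
def bars (k : ℕ) : ℕ :=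
  ∑ i ∈ Finset.univ.filter (fun i : Fin N => i.val < k), (if b i then 1 else 0)

/-- Partial defect over the first `k` positions. -/
def pd (k : ℕ) : ℤ :=
  ∑ j ∈ Finset.univ.filter (fun j : Fin N => j.val < k),
    (if b j then 0 else sgn N b j * ε j)

lemma filter_lt_succ (k : ℕ) (h : k < N) :
    (Finset.univ.filter (fun i : Fin N => i.val < k + 1))
    = insert ⟨k, h⟩ (Finset.univ.filter (fun i : Fin N => i.val < k)) := by
  ext i
  simp [Fin.ext_iff]
  omega

lemma not_mem (k : ℕ) (h : k < N) :
    (⟨k, h⟩ : Fin N) ∉ (Finset.univ.filter (fun i : Fin N => i.val < k)) := by simp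

lemma bars_succ (k : ℕ) (h : k < N) :
    bars N b (k+1) = bars N b k + (if b ⟨k, h⟩ then 1 else 0) := by
  rw [bars, filter_lt_succ N k h, Finset.sum_insert (not_mem N k h)]
  rw [add_comm]; rfl

lemma pd_succ (k : ℕ) (h : k < N) :
    pd N ε b (k+1) = pd N ε b k + (if b ⟨k, h⟩ then 0 else sgn N b ⟨k, h⟩ * ε ⟨k, h⟩) := by
  rw [pd, filter_lt_succ N k h, Finset.sum_insert (not_mem N k h)]
  rw [add_comm]; rfl

lemma sgn_eq (k : ℕ) (h : k < N) : sgn N b ⟨k, h⟩ = (-1) ^ (bars N b k) := by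
  have : (Finset.univ.filter (fun i : Fin N => i < (⟨k, h⟩ : Fin N) ∧ b i = true)).card
      = bars N b k := by
    rw [Finset.card_filter, bars, Finset.sum_filter]
    congr 1; ext i; simp [Fin.lt_def, ite_and]
  rw [sgn, this]

lemma neg_one_sq' (B : ℕ) : ((-1 : ZMod n) ^ B) * ((-1 : ZMod n) ^ B) = 1 := by
  rw [← pow_add]
  exact Even.neg_one_pow ⟨B, rfl⟩

lemma seq_formula (v : ZMod n × ℤˣ) : ∀ k, k ≤ N →
    seqC n N ε b v k =
      ( (((-1 : ℤ) ^ (bars N b k) : ℤ) : ZMod n) * (v.1 + ((pd N ε b k : ℤ) : ZMod n)),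
        ((-1 : ℤˣ)) ^ (bars N b k) * v.2 ) := by
  intro k
  induction k with
  | zero =>
    intro _
    simp [seqC, bars, pd]
  | succ k ih =>
    intro hk
    have h : k < N := hk
    rw [seqC, dif_pos h, ih (le_of_lt h), bars_succ N b k h, pd_succ N ε b k h,
      sgn_eq N b k h, stepF]
    rcases hbk : b ⟨k, h⟩ with _ | _
    · simp only [Bool.false_eq_true, if_false, Nat.add_zero]
      refine Prod.ext ?_ rfl
      push_cast
      linear_combination (-(ε ⟨k, h⟩ : ZMod n)) * neg_one_sq' n (bars N b k)
    · simp only [if_true, add_zero]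
      refine Prod.ext ?_ ?_
      · dsimp only
        push_cast
        ring
      · dsimp only
        rw [pow_succ, mul_comm ((-1 : ℤˣ) ^ bars N b k) (-1), mul_assoc, neg_one_mul]

lemma filter_univ : (Finset.univ.filter (fun i : Fin N => i.val < N)) = Finset.univ := by
  apply Finset.filter_true_of_mem; intro i _; exact i.isLt

lemma bars_last : bars N b N = numBars N b := by
  rw [bars, filter_univ, numBars, Finset.card_filter]

lemma pd_last : pd N ε b N = defect N ε b := by
  rw [pd, filter_univ, defect, Finset.sum_filter]
  apply Finset.sum_congr rfl
  intro j _
  rcases hj : b j <;> simp [hj]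

lemma closure (hb : Even (numBars N b)) (hd : (n : ℤ) ∣ defect N ε b) (v : ZMod n × ℤˣ) :
    seqC n N ε b v N = v := by
  rw [seq_formula n N ε b v N le_rfl, bars_last, pd_last]
  have h1 : ((-1 : ℤ)) ^ (numBars N b) = 1 := Even.neg_one_pow hb
  have h2 : ((-1 : ℤˣ)) ^ (numBars N b) = 1 := Even.neg_one_pow hb
  have h3 : ((defect N ε b : ℤ) : ZMod n) = 0 :=
    (ZMod.intCast_zmod_eq_zero_iff_dvd _ n).mpr hd
  rw [h1, h2, h3]
  simp

lemma coloring_eq (C : Fin (N + 1) → ZMod n × ℤˣ)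
    (hC : ∀ j : Fin N, C j.succ =
      if b j then (-(C j.castSucc).1, -(C j.castSucc).2)
      else ((C j.castSucc).1 + (ε j : ZMod n), (C j.castSucc).2)) :
    ∀ m (hm : m ≤ N), C ⟨m, Nat.lt_succ_of_le hm⟩ = seqC n N ε b (C 0) m := by
  intro m
  induction m with
  | zero => intro _; rfl
  | succ m ih =>
    intro hm
    have h : m < N := hm
    have e1 : (⟨m + 1, Nat.lt_succ_of_le hm⟩ : Fin (N + 1)) = (⟨m, h⟩ : Fin N).succ := rfl
    have e2 : (Fin.castSucc ⟨m, h⟩ : Fin (N + 1)) = ⟨m, Nat.lt_succ_of_le h.le⟩ := rfl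
    rw [e1, hC ⟨m, h⟩, e2, ih h.le]
    simp [seqC, stepF, h]

end Stmt8Aux

theorem stmt_8 (N n : ℕ) (ε : Fin N → ℤ) (b : Fin N → Bool)
    (hb : Even (numBars N b)) (hd : (n : ℤ) ∣ defect N ε b) :
    (∀ a₀ : ZMod n, ∀ e₀ : ℤˣ,
      ∃! C : Fin (N + 1) → ZMod n × ℤˣ, IsColoring n N ε b C ∧ C 0 = (a₀, e₀)) ∧
    (0 < n → {C : Fin (N + 1) → ZMod n × ℤˣ | IsColoring n N ε b C}.ncard = 2 * n) := by
  open Stmt8Aux in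
  set g : ZMod n × ℤˣ → (Fin (N + 1) → ZMod n × ℤˣ) :=
    fun v k => Stmt8Aux.seqC n N ε b v k.val with hg
  have hg0 : ∀ v, g v 0 = v := fun v => rfl
  have hgcol : ∀ v, IsColoring n N ε b (g v) := by
    intro v
    constructor
    · show Stmt8Aux.seqC n N ε b v 0 = Stmt8Aux.seqC n N ε b v N
      rw [Stmt8Aux.closure n N ε b hb hd v]
      rfl
    · intro j
      show Stmt8Aux.seqC n N ε b v (j.val + 1) = _
      rw [Stmt8Aux.seqC, dif_pos j.isLt]
      simp only [Stmt8Aux.stepF, Fin.eta]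
      rfl
  have huniq : ∀ C, IsColoring n N ε b C → C = g (C 0) := by
    intro C hC
    funext k
    have := Stmt8Aux.coloring_eq n N ε b C hC.2 k.val (Nat.lt_succ_iff.mp k.isLt)
    simpa [Fin.eta] using this
  constructor
  · intro a₀ e₀
    refine ⟨g (a₀, e₀), ⟨hgcol _, hg0 _⟩, ?_⟩
    intro C ⟨hC, hC0⟩
    rw [huniq C hC, hC0]
  · intro hn
    have hrange : {C : Fin (N + 1) → ZMod n × ℤˣ | IsColoring n N ε b C} = Set.range g := by
      ext C
      constructor
      · intro hC; exact ⟨C 0, (huniq C hC).symm⟩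
      · rintro ⟨v, rfl⟩; exact hgcol v
    have hinj : Function.Injective g := by
      intro v w h
      have := congrFun h 0
      rwa [hg0, hg0] at this
    rw [hrange, ← Nat.card_coe_set_eq, Nat.card_range_of_injective hinj,
      Nat.card_prod, Nat.card_zmod, Nat.card_eq_fintype_card, Fintype.card_units_int,
      mul_comm]
end

section
/- Let b : Fin N → Bool with an even number of positions where b is true, and define σ : Fin N → {+1,−1} by σ(j) = (−1)^{#\{i < j : b i = true\}}. Let b' be obtained from b by a cyclic rotation. Then the signed sum d(ε, b) = Σ_{j : b j = false} σ(j)·ε j satisfies |d(ε, b)| = |d(ε', b')| where ε' is the corresponding rotation of ε. In other words, the absolute value of the defect is independent of the choice of starting semiarc on the cycle. -/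
/-!
Rotating the data by one step moves the first position `0` to the end. For every other
position the number of bars before it drops by `[b 0]`, while the old first position now has
all bars but possibly itself before it, i.e. `numBars - [b 0]` of them, which has the parity of
`[b 0]` because `numBars` is even. So every sign is multiplied by the same `(-1)^[b 0]`, and the
defect changes by that factor; iterating gives invariance of `|d|` under all rotations.
-/

open Finset

section

variable {M : ℕ}

lemma card_filter_lt_succ_eq_card_filter_comp_add_one (b : Fin (M + 1) → Bool) (i : Fin M) :
    #{k | k < i.succ ∧ b k = true}
      = #{k | k < i.castSucc ∧ b (k + 1) = true} + (b 0).toNat := by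
  rw [card_filter, card_filter, Fin.sum_univ_succ, Fin.sum_univ_castSucc]
  simp only [Fin.coeSucc_eq_succ, Fin.succ_lt_succ_iff, Fin.castSucc_lt_castSucc_iff,
    Fin.succ_pos, true_and, not_lt.mpr (Fin.le_last _), false_and, if_false, add_zero]
  cases b 0 <;> simp [add_comm]

lemma numBars_eq_card_filter_lt_last (b : Fin (M + 1) → Bool) :
    numBars (M + 1) b = #{k | k < Fin.last M ∧ b (k + 1) = true} + (b 0).toNat := by
  rw [numBars, card_filter, card_filter, Fin.sum_univ_succ, Fin.sum_univ_castSucc]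
  simp only [Fin.coeSucc_eq_succ, Fin.castSucc_lt_last, true_and, lt_irrefl, false_and,
    if_false, add_zero]
  cases b 0 <;> simp [add_comm]

lemma sgn_add_one (b : Fin (M + 1) → Bool) (hb : Even (numBars (M + 1) b)) (j : Fin (M + 1)) :
    sgn (M + 1) b (j + 1) = sgn (M + 1) (fun k => b (k + 1)) j * (-1) ^ (b 0).toNat := by
  rw [sgn, sgn, ← pow_add]
  induction j using Fin.lastCases with
  | last =>
    rw [Fin.last_add_one, ← numBars_eq_card_filter_lt_last, hb.neg_one_pow]
    simp
  | cast i => rw [Fin.coeSucc_eq_succ, card_filter_lt_succ_eq_card_filter_comp_add_one]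

lemma defect_eq_neg_one_pow_mul_defect_comp_add_one (ε : Fin (M + 1) → ℤ)
    (b : Fin (M + 1) → Bool) (hb : Even (numBars (M + 1) b)) :
    defect (M + 1) ε b
      = (-1) ^ (b 0).toNat * defect (M + 1) (fun k => ε (k + 1)) (fun k => b (k + 1)) := by
  rw [defect, defect, sum_filter, sum_filter, mul_sum,
    ← Equiv.sum_comp (Equiv.addRight (1 : Fin (M + 1)))]
  refine sum_congr rfl fun j _ => ?_
  simp only [Equiv.coe_addRight, sgn_add_one b hb]
  split_ifs <;> ring

lemma numBars_comp_add_right (b : Fin (M + 1) → Bool) (r : Fin (M + 1)) :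
    numBars (M + 1) (fun k => b (k + r)) = numBars (M + 1) b := by
  rw [numBars, numBars, card_filter, card_filter]
  exact Equiv.sum_comp (Equiv.addRight r) fun k => if b k = true then 1 else 0

lemma natAbs_defect_comp_add_right (ε : Fin (M + 1) → ℤ) (b : Fin (M + 1) → Bool)
    (hb : Even (numBars (M + 1) b)) (r : Fin (M + 1)) :
    (defect (M + 1) (fun k => ε (k + r)) (fun k => b (k + r))).natAbs
      = (defect (M + 1) ε b).natAbs := by
  induction r using Fin.induction with
  | zero => simp
  | succ i ih =>
    have hbi : Even (numBars (M + 1) fun k => b (k + i.castSucc)) := by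
      rwa [numBars_comp_add_right]
    rw [← ih, defect_eq_neg_one_pow_mul_defect_comp_add_one _ _ hbi, Int.natAbs_mul,
      Int.natAbs_pow, Int.natAbs_neg, Int.natAbs_one, one_pow, one_mul, ← Fin.coeSucc_eq_succ]
    simp only [add_assoc, add_comm (1 : Fin (M + 1))]

end

theorem stmt_13 (N : ℕ) (ε : Fin N → ℤ) (b : Fin N → Bool)
    (hb : Even (numBars N b)) (r : Fin N)
    (ε' : Fin N → ℤ) (b' : Fin N → Bool)
    (hε' : ∀ j, ε' j = ε (j + r)) (hb' : ∀ j, b' j = b (j + r)) :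
    (defect N ε b).natAbs = (defect N ε' b').natAbs := by
  obtain rfl : ε' = fun j => ε (j + r) := funext hε'
  obtain rfl : b' = fun j => b (j + r) := funext hb'
  cases N with
  | zero => exact r.elim0
  | succ M => exact (natAbs_defect_comp_add_right ε b hb r).symm
end
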